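/- For every n ≥ 2 there exists a surjective kG-module homomorphism π : Q_τ ⊕ Q_τ ⊕ (kG)^{n−1} → V_{2n,∞} which splits on restriction to each of the subgroups H₁, H₂, H₃, and whose kernel is isomorphic as a kG-module to V_{2n,∞}. -/

import Mathlib

/-- The Klein four-group `G = C₂ × C₂`. -/
abbrev K4 : Type := Multiplicative (ZMod 2 × ZMod 2)

/-- The generator `σ` of the Klein four-group. -/
def sg : K4 := Multiplicative.ofAdd ((1 : ZMod 2), (0 : ZMod 2))

/-- The generator `τ` of the Klein four-group. -/
def tg : K4 := Multiplicative.ofAdd ((0 : ZMod 2), (1 : ZMod 2))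

/-- The subgroup `H₁ = ⟨σ⟩`. -/
def H1 : Subgroup K4 := Subgroup.zpowers sg

/-- The subgroup `H₂ = ⟨τ⟩`. -/
def H2 : Subgroup K4 := Subgroup.zpowers tg

/-- The subgroup `H₃ = ⟨στ⟩`. -/
def H3 : Subgroup K4 := Subgroup.zpowers (sg * tg)

/-- `V` carries the structure of the module `V_{2n,∞}`: the basis vector `B (Sum.inl i)`
is `a_{i+1}` and `B (Sum.inr i)` is `b_{i+1}` (for `0 ≤ i ≤ n-1`), with `X·aᵢ = bᵢ` for
all `i`, `Y·aᵢ = b_{i+1}` for `i ≤ n-1`, `Y·aₙ = 0`, and `X·bⱼ = Y·bⱼ = 0`, i.e.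
(with `σ = 1 + X`, `τ = 1 + Y`) `σ·aᵢ = aᵢ + bᵢ`, `τ·aᵢ = aᵢ + b_{i+1}` (reading
`b_{n+1} = 0`), and `σ, τ` fix the `bⱼ`. -/
def IsVinf (k : Type) [Field k] (n : ℕ) (V : Type) [AddCommGroup V] [Module k V]
    [DistribMulAction K4 V] (B : Module.Basis (Fin n ⊕ Fin n) k V) : Prop :=
  (∀ i : Fin n, sg • B (Sum.inl i) = B (Sum.inl i) + B (Sum.inr i)) ∧
  (∀ i : Fin n, tg • B (Sum.inl i) = B (Sum.inl i) +
      (if h : (i : ℕ) + 1 < n then B (Sum.inr ⟨(i : ℕ) + 1, h⟩) else 0)) ∧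
  (∀ j : Fin n, sg • B (Sum.inr j) = B (Sum.inr j)) ∧
  (∀ j : Fin n, tg • B (Sum.inr j) = B (Sum.inr j))

/-- `V` carries the structure of the module `Q_σ`: basis `r = B 0`, `s = B 1` with
`Y·r = s`, `X·r = X·s = Y·s = 0` (so `σ` acts trivially). -/
def IsQsig (k : Type) [Field k] (V : Type) [AddCommGroup V] [Module k V]
    [DistribMulAction K4 V] (B : Module.Basis (Fin 2) k V) : Prop :=
  (sg • B 0 = B 0) ∧ (tg • B 0 = B 0 + B 1) ∧ (sg • B 1 = B 1) ∧ (tg • B 1 = B 1)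

/-- `V` carries the structure of the module `Q_τ`: basis `r = B 0`, `s = B 1` with
`X·r = s`, `Y·r = X·s = Y·s = 0` (so `τ` acts trivially). -/
def IsQtau (k : Type) [Field k] (V : Type) [AddCommGroup V] [Module k V]
    [DistribMulAction K4 V] (B : Module.Basis (Fin 2) k V) : Prop :=
  (sg • B 0 = B 0 + B 1) ∧ (tg • B 0 = B 0) ∧ (sg • B 1 = B 1) ∧ (tg • B 1 = B 1)

/-- `V` carries the structure of the module `Q_{στ}`: basis `r = B 0`, `s = B 1` with
`X·r = Y·r = s`, `X·s = Y·s = 0` (so `στ` acts trivially). -/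
def IsQst (k : Type) [Field k] (V : Type) [AddCommGroup V] [Module k V]
    [DistribMulAction K4 V] (B : Module.Basis (Fin 2) k V) : Prop :=
  (sg • B 0 = B 0 + B 1) ∧ (tg • B 0 = B 0 + B 1) ∧ (sg • B 1 = B 1) ∧ (tg • B 1 = B 1)

/-!
Write `a_1, …, a_n, b_1, …, b_n` for the basis of `V = V_{2n,∞}` and `X = σ - 1`, `Y = τ - 1`,
`Z = στ - 1`. The cover `π` sends the generator of the `c`-th copy of `kG` to `a_c` (`c < n`) and
the generators `r` of the two copies of `Q_τ` to `a_n` and `a_n + b_1`. Let `α_i` be the obvious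
preimage of `a_i`. A splitting over `⟨z⟩` sends `a_i` to `α_i` and `b_j` to a `z`-fixed preimage:
`X α_j` for `z = σ` (since `b_j = X a_j`); `(-r, r, 0)` and `Y α_{j-1}` for `z = τ` (since
`b_{j+1} = Y a_j`); and `γ_j = Z α_j - γ_{j+1}` for `z = στ` (since `Z a_j = b_j + b_{j+1}`).

If `s₂` is the `τ`-splitting, `ι = σ s₂ - s₂ σ` lands in `ker π`, commutes with `τ` because `s₂`
does, and commutes with `σ` because `σ² = 1` in characteristic `2`. It has an explicit left
inverse, and `dim ker π = 4n - 2n = dim V`, so `ι` is an isomorphism onto `ker π`.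
-/

open Module

section Equivariance

theorem map_smul_of_mem_closure {G M N : Type*} [Group G] [MulAction G M] [MulAction G N]
    (f : M → N) {S : Set G} (hS : ∀ z ∈ S, ∀ v, f (z • v) = z • f v) {g : G}
    (hg : g ∈ Subgroup.closure S) (v : M) : f (g • v) = g • f v := by
  induction hg using Subgroup.closure_induction generalizing v with
  | mem z hz => exact hS z hz v
  | one => simp
  | mul x y _ _ hx hy => rw [mul_smul, hx, hy, mul_smul]
  | inv x _ hx => rw [eq_inv_smul_iff, ← hx, smul_inv_smul]

theorem map_smul_of_mem_zpowers {G M N : Type*} [Group G] [MulAction G M] [MulAction G N]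
    (f : M → N) {z : G} (hz : ∀ v, f (z • v) = z • f v) {g : G}
    (hg : g ∈ Subgroup.zpowers z) (v : M) : f (g • v) = g • f v := by
  rw [Subgroup.zpowers_eq_closure] at hg
  exact map_smul_of_mem_closure f (by simpa using hz) hg v

variable {k G M N ι : Type*} [Semiring k] [Monoid G]
  [AddCommMonoid M] [Module k M] [DistribMulAction G M] [SMulCommClass G k M]
  [AddCommMonoid N] [Module k N] [DistribMulAction G N] [SMulCommClass G k N]

theorem Module.Basis.map_smul_of_forall (b : Basis ι k M) (f : M →ₗ[k] N) (g : G)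
    (h : ∀ i, f (g • b i) = g • f (b i)) (v : M) : f (g • v) = g • f v := by
  have key : f ∘ₗ DistribSMul.toLinearMap k M g = DistribSMul.toLinearMap k N g ∘ₗ f :=
    b.ext fun i => by simpa using h i
  simpa using LinearMap.congr_fun key v

theorem Module.Basis.leftInverse_constr (b : Basis ι k M) (π : N →ₗ[k] M) (f : ι → N)
    (hf : ∀ i, π (f i) = b i) : Function.LeftInverse π (b.constr ℕ f) := by
  have key : π ∘ₗ b.constr ℕ f = LinearMap.id := b.ext fun i => by simp [hf]
  exact LinearMap.congr_fun key

end Equivariance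

theorem CharTwo.neg_eq_of_module (k : Type*) {M : Type*} [Ring k] [CharP k 2]
    [AddCommGroup M] [Module k M] (v : M) : -v = v := by
  rw [← neg_one_smul k v, CharTwo.neg_eq, one_smul]

theorem CharTwo.sub_comm_of_module (k : Type*) {M : Type*} [Ring k] [CharP k 2]
    [AddCommGroup M] [Module k M] (v w : M) : v - w = w - v := by
  rw [← neg_sub, CharTwo.neg_eq_of_module k]

theorem CharTwo.smul_smul_sub_self (k : Type*) {G M : Type*} [Ring k] [CharP k 2] [Monoid G]
    [AddCommGroup M] [Module k M] [DistribMulAction G M] {z : G} (hz : z * z = 1) (x : M) :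
    z • (z • x - x) = z • x - x := by
  rw [smul_sub, smul_smul, hz, one_smul, CharTwo.sub_comm_of_module k]

def smulDefect {k G V D : Type*} [Semiring k] [Monoid G]
    [AddCommGroup V] [Module k V] [DistribMulAction G V] [SMulCommClass G k V]
    [AddCommGroup D] [Module k D] [DistribMulAction G D] [SMulCommClass G k D]
    (g : G) (s : V →ₗ[k] D) : V →ₗ[k] D :=
  DistribSMul.toLinearMap k D g ∘ₗ s - s ∘ₗ DistribSMul.toLinearMap k V g

section SmulDefect

variable {k G V D : Type*} [Ring k] [Monoid G]
  [AddCommGroup V] [Module k V] [DistribMulAction G V] [SMulCommClass G k V]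
  [AddCommGroup D] [Module k D] [DistribMulAction G D] [SMulCommClass G k D]
  {g : G} {s : V →ₗ[k] D}

theorem smulDefect_apply (v : V) : smulDefect g s v = g • s v - s (g • v) := rfl

theorem map_smulDefect_eq_zero {π : D →ₗ[k] V} (hπ : ∀ q, π (g • q) = g • π q)
    (hs : Function.LeftInverse π s) (v : V) : π (smulDefect g s v) = 0 := by
  rw [smulDefect_apply, map_sub, hπ, hs, hs, sub_self]

theorem smulDefect_map_smul_of_commute {h : G} (hgh : Commute g h)
    (hs : ∀ v, s (h • v) = h • s v) (v : V) :
    smulDefect g s (h • v) = h • smulDefect g s v := by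
  simp only [smulDefect_apply, smul_sub, hs, smul_smul, hgh.eq]
  rw [mul_smul h g v, hs]

theorem smulDefect_map_smul_self [CharP k 2] (hg : g * g = 1) (v : V) :
    smulDefect g s (g • v) = g • smulDefect g s v := by
  simp only [smulDefect_apply, smul_sub, smul_smul, hg, one_smul]
  exact CharTwo.sub_comm_of_module k _ _

end SmulDefect

theorem LinearMap.range_eq_ker_of_finrank_eq {k U W X : Type*} [Field k]
    [AddCommGroup U] [Module k U] [AddCommGroup W] [Module k W] [FiniteDimensional k W]
    [AddCommGroup X] [Module k X] {f : U →ₗ[k] W} {g : W →ₗ[k] X}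
    (hf : Function.Injective f) (hg : Function.Surjective g) (hgf : g ∘ₗ f = 0)
    (hdim : finrank k W = finrank k U + finrank k X) : range f = ker g := by
  refine Submodule.eq_of_le_of_finrank_eq ?_ ?_
  · rintro _ ⟨u, rfl⟩
    exact LinearMap.congr_fun hgf u
  · have := finrank_range_add_finrank_ker g
    rw [range_eq_top.mpr hg, finrank_top] at this
    rw [finrank_range_of_inj hf]
    omega

namespace K4

theorem eq_one_or_sg_or_tg_or_sg_mul_tg : ∀ g : K4, g = 1 ∨ g = sg ∨ g = tg ∨ g = sg * tg := by
  decide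

theorem mul_self_eq_one : ∀ g : K4, g * g = 1 := by decide

theorem closure_sg_tg : Subgroup.closure {sg, tg} = ⊤ := by
  refine eq_top_iff.mpr fun g _ => ?_
  have hs : sg ∈ Subgroup.closure {sg, tg} := Subgroup.subset_closure (by simp)
  have ht : tg ∈ Subgroup.closure {sg, tg} := Subgroup.subset_closure (by simp)
  rcases eq_one_or_sg_or_tg_or_sg_mul_tg g with rfl | rfl | rfl | rfl
  exacts [one_mem _, hs, ht, mul_mem hs ht]

theorem map_smul_of_sg_tg {M N : Type*} [MulAction K4 M] [MulAction K4 N] (f : M → N)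
    (hs : ∀ v, f (sg • v) = sg • f v) (ht : ∀ v, f (tg • v) = tg • f v) (g : K4) (v : M) :
    f (g • v) = g • f v := by
  refine map_smul_of_mem_closure f (S := {sg, tg}) ?_ (closure_sg_tg ▸ Subgroup.mem_top g) v
  rintro z (rfl | rfl)
  exacts [hs, ht]

end K4

section RegularModule

variable {k : Type*} [Semiring k]

/-- `kG` as `K4 → k`, with the left regular action `(g • F) x = F (g⁻¹ * x)`. -/
instance : DistribMulAction K4 (K4 → k) :=
  { arrowAction with smul_zero := fun _ => rfl, smul_add := fun _ _ _ => rfl }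

instance : SMulCommClass K4 k (K4 → k) := ⟨fun _ _ _ => rfl⟩

theorem smul_single_one (g h : K4) :
    g • (Pi.single h (1 : k) : K4 → k) = Pi.single (g * h) (1 : k) := by
  funext x
  change (Pi.single h (1 : k) : K4 → k) (g⁻¹ * x) = _
  simp only [Pi.single_apply, inv_mul_eq_iff_eq_mul]

variable (k) {ι : Type*} [Fintype ι]

noncomputable def freeBasis : Basis (Σ _ : ι, K4) k (ι → K4 → k) :=
  Pi.basis fun _ => Pi.basisFun k K4

theorem freeBasis_apply [DecidableEq ι] (c : ι) (h : K4) :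
    freeBasis k ⟨c, h⟩ = Pi.single c (Pi.single h 1) := by
  simp [freeBasis]

theorem smul_freeBasis [DecidableEq ι] (g : K4) (c : ι) (h : K4) :
    g • freeBasis k ⟨c, h⟩ = freeBasis k ⟨c, g * h⟩ := by
  rw [freeBasis_apply, freeBasis_apply, ← Pi.single_smul, smul_single_one]

variable {k} {V : Type*} [AddCommGroup V] [Module k V] [DistribMulAction K4 V]

noncomputable def freeLift (w : ι → V) : (ι → K4 → k) →ₗ[k] V :=
  (freeBasis k).constr ℕ fun p => p.2 • w p.1

theorem freeLift_freeBasis (w : ι → V) (c : ι) (h : K4) :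
    freeLift w (freeBasis k ⟨c, h⟩) = h • w c :=
  (freeBasis k).constr_basis ℕ _ _

theorem freeLift_map_smul [SMulCommClass K4 k V] (w : ι → V) (g : K4) (F : ι → K4 → k) :
    freeLift w (g • F) = g • freeLift w F := by
  classical
  refine (freeBasis k).map_smul_of_forall _ g (fun ⟨c, h⟩ => ?_) F
  rw [smul_freeBasis, freeLift_freeBasis, freeLift_freeBasis, mul_smul]

end RegularModule

section Modules

variable {k : Type} [Field k] {V Qt : Type}
  [AddCommGroup V] [Module k V] [DistribMulAction K4 V]
  [AddCommGroup Qt] [Module k Qt]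

noncomputable def qtauLift (Bt : Basis (Fin 2) k Qt) (x : V) : Qt →ₗ[k] V :=
  Bt.constr ℕ ![x, sg • x - x]

theorem qtauLift_apply_zero (Bt : Basis (Fin 2) k Qt) (x : V) : qtauLift Bt x (Bt 0) = x := by
  simp [qtauLift]

theorem qtauLift_apply_one (Bt : Basis (Fin 2) k Qt) (x : V) :
    qtauLift Bt x (Bt 1) = sg • x - x := by
  simp [qtauLift]

theorem qtauLift_map_smul [CharP k 2] [DistribMulAction K4 Qt] [SMulCommClass K4 k V]
    [SMulCommClass K4 k Qt] {Bt : Basis (Fin 2) k Qt} (hQt : IsQtau k Qt Bt) {x : V}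
    (hx : tg • x = x) (g : K4) (q : Qt) : qtauLift Bt x (g • q) = g • qtauLift Bt x q := by
  have hsg := CharTwo.smul_smul_sub_self k (K4.mul_self_eq_one sg) x
  have htg : tg • (sg • x - x) = sg • x - x := by
    rw [smul_sub, smul_comm, hx]
  refine K4.map_smul_of_sg_tg _
    (Bt.map_smul_of_forall _ sg (Fin.forall_fin_two.mpr ⟨?_, ?_⟩))
    (Bt.map_smul_of_forall _ tg (Fin.forall_fin_two.mpr ⟨?_, ?_⟩)) g q
  · rw [hQt.1, map_add, qtauLift_apply_zero, qtauLift_apply_one, add_sub_cancel]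
  · rw [hQt.2.2.1, qtauLift_apply_one, hsg]
  · rw [hQt.2.1, qtauLift_apply_zero, hx]
  · rw [hQt.2.2.2, qtauLift_apply_one, htg]

variable {M : ℕ} {B : Basis (Fin (M + 1) ⊕ Fin (M + 1)) k V}

theorem IsVinf.tg_smul_castSucc (hV : IsVinf k (M + 1) V B) (c : Fin M) :
    tg • B (.inl c.castSucc) = B (.inl c.castSucc) + B (.inr c.succ) := by
  rw [hV.2.1, dif_pos (by simp)]
  rfl

theorem IsVinf.tg_smul_last (hV : IsVinf k (M + 1) V B) :
    tg • B (.inl (Fin.last M)) = B (.inl (Fin.last M)) := by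
  rw [hV.2.1, dif_neg (by simp), add_zero]

theorem IsVinf.smul_inr (hV : IsVinf k (M + 1) V B) (g : K4) (j : Fin (M + 1)) :
    g • B (.inr j) = B (.inr j) := by
  rcases K4.eq_one_or_sg_or_tg_or_sg_mul_tg g with rfl | rfl | rfl | rfl
  · exact one_smul _ _
  · exact hV.2.2.1 j
  · exact hV.2.2.2 j
  · rw [mul_smul, hV.2.2.2, hV.2.2.1]

theorem IsVinf.sg_mul_tg_smul_castSucc (hV : IsVinf k (M + 1) V B) (c : Fin M) :
    (sg * tg) • B (.inl c.castSucc) =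
      B (.inl c.castSucc) + B (.inr c.castSucc) + B (.inr c.succ) := by
  rw [mul_smul, hV.tg_smul_castSucc, smul_add, hV.1, hV.smul_inr]

theorem IsVinf.sg_mul_tg_smul_last (hV : IsVinf k (M + 1) V B) :
    (sg * tg) • B (.inl (Fin.last M)) = B (.inl (Fin.last M)) + B (.inr (Fin.last M)) := by
  rw [mul_smul, hV.tg_smul_last, hV.1]

end Modules

namespace Vinf

section Construction

variable {k : Type} [Field k] {V Qt : Type}
  [AddCommGroup V] [Module k V] [DistribMulAction K4 V]
  [AddCommGroup Qt] [Module k Qt]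
  {M : ℕ} (B : Basis (Fin (M + 1) ⊕ Fin (M + 1)) k V) (Bt : Basis (Fin 2) k Qt)

noncomputable def cover : Qt × Qt × (Fin M → K4 → k) →ₗ[k] V :=
  (qtauLift Bt (B (.inl (Fin.last M)))).coprod
    ((qtauLift Bt (B (.inl (Fin.last M)) + B (.inr 0))).coprod
      (freeLift fun c => B (.inl c.castSucc)))

theorem cover_apply (q₁ q₂ : Qt) (F : Fin M → K4 → k) :
    cover B Bt (q₁, q₂, F) = qtauLift Bt (B (.inl (Fin.last M))) q₁
      + (qtauLift Bt (B (.inl (Fin.last M)) + B (.inr 0)) q₂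
        + freeLift (fun c => B (.inl c.castSucc)) F) := rfl

noncomputable def liftA : Fin (M + 1) → Qt × Qt × (Fin M → K4 → k) :=
  Fin.lastCases (Bt 0, 0, 0) fun c => (0, 0, freeBasis k ⟨c, 1⟩)

variable {B Bt} in
theorem cover_liftA (i : Fin (M + 1)) : cover B Bt (liftA Bt i) = B (.inl i) := by
  cases i using Fin.lastCases with
  | last => simp [liftA, cover_apply, qtauLift_apply_zero]
  | cast c => simp [liftA, cover_apply, freeLift_freeBasis]

variable [DistribMulAction K4 Qt]

noncomputable def liftB₂ : Fin (M + 1) → Qt × Qt × (Fin M → K4 → k) :=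
  Fin.cases (-Bt 0, Bt 0, 0) fun c => tg • liftA Bt c.castSucc - liftA Bt c.castSucc

noncomputable def liftB₃ : Fin (M + 1) → Qt × Qt × (Fin M → K4 → k) :=
  Fin.reverseInduction ((sg * tg) • liftA Bt (Fin.last M) - liftA Bt (Fin.last M))
    fun c γ => (sg * tg) • liftA Bt c.castSucc - liftA Bt c.castSucc - γ

variable {B Bt}

theorem liftB₃_last : liftB₃ Bt (Fin.last M) =
    (sg * tg) • liftA Bt (Fin.last M) - liftA Bt (Fin.last M) :=
  Fin.reverseInduction_last

theorem liftB₃_castSucc (c : Fin M) : liftB₃ Bt c.castSucc =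
    (sg * tg) • liftA Bt c.castSucc - liftA Bt c.castSucc - liftB₃ Bt c.succ :=
  Fin.reverseInduction_castSucc c

variable [CharP k 2]

theorem tg_smul_liftB₂ (hQt : IsQtau k Qt Bt) (j : Fin (M + 1)) :
    tg • liftB₂ Bt j = liftB₂ Bt j := by
  cases j using Fin.cases with
  | zero => simp [liftB₂, hQt.2.1]
  | succ c => exact CharTwo.smul_smul_sub_self k (K4.mul_self_eq_one tg) _

theorem sg_mul_tg_smul_liftB₃ (j : Fin (M + 1)) :
    (sg * tg) • liftB₃ Bt j = liftB₃ Bt j := by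
  have hZ (x : Qt × Qt × (Fin M → K4 → k)) :=
    CharTwo.smul_smul_sub_self k (K4.mul_self_eq_one (sg * tg)) x
  induction j using Fin.reverseInduction with
  | last => rw [liftB₃_last, hZ]
  | cast c ih => rw [liftB₃_castSucc, smul_sub, hZ, ih]

variable [SMulCommClass K4 k V] [SMulCommClass K4 k Qt]

theorem cover_map_smul (hV : IsVinf k (M + 1) V B) (hQt : IsQtau k Qt Bt) (g : K4)
    (q : Qt × Qt × (Fin M → K4 → k)) : cover B Bt (g • q) = g • cover B Bt q := by
  obtain ⟨q₁, q₂, F⟩ := q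
  have hlast := hV.tg_smul_last
  have hlast' :
      tg • (B (.inl (Fin.last M)) + B (.inr 0)) = B (.inl (Fin.last M)) + B (.inr 0) := by
    rw [smul_add, hlast, hV.smul_inr]
  change cover B Bt (g • q₁, g • q₂, g • F) = _
  rw [cover_apply, cover_apply, qtauLift_map_smul hQt hlast, qtauLift_map_smul hQt hlast',
    freeLift_map_smul, smul_add, smul_add]

theorem cover_liftB₂ (hV : IsVinf k (M + 1) V B) (hQt : IsQtau k Qt Bt) (j : Fin (M + 1)) :
    cover B Bt (liftB₂ Bt j) = B (.inr j) := by
  cases j using Fin.cases with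
  | zero => simp [liftB₂, cover_apply, qtauLift_apply_zero]
  | succ c =>
    rw [liftB₂, Fin.cases_succ, map_sub, cover_map_smul hV hQt, cover_liftA,
      hV.tg_smul_castSucc, add_sub_cancel_left]

theorem cover_liftB₃ (hV : IsVinf k (M + 1) V B) (hQt : IsQtau k Qt Bt) (j : Fin (M + 1)) :
    cover B Bt (liftB₃ Bt j) = B (.inr j) := by
  induction j using Fin.reverseInduction with
  | last =>
    rw [liftB₃_last, map_sub, cover_map_smul hV hQt, cover_liftA, hV.sg_mul_tg_smul_last,
      add_sub_cancel_left]
  | cast c ih =>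
    rw [liftB₃_castSucc, map_sub, map_sub, cover_map_smul hV hQt, cover_liftA, ih,
      hV.sg_mul_tg_smul_castSucc]
    abel

end Construction

section Splittings

variable {k : Type} [Field k] [CharP k 2] {V Qt : Type}
  [AddCommGroup V] [Module k V] [DistribMulAction K4 V] [SMulCommClass K4 k V]
  [AddCommGroup Qt] [Module k Qt] [DistribMulAction K4 Qt] [SMulCommClass K4 k Qt]
  {M : ℕ} (B : Basis (Fin (M + 1) ⊕ Fin (M + 1)) k V) (Bt : Basis (Fin 2) k Qt)

noncomputable def splitH1 : V →ₗ[k] Qt × Qt × (Fin M → K4 → k) :=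
  B.constr ℕ (Sum.elim (liftA Bt) fun j => sg • liftA Bt j - liftA Bt j)

noncomputable def splitH2 : V →ₗ[k] Qt × Qt × (Fin M → K4 → k) :=
  B.constr ℕ (Sum.elim (liftA Bt) (liftB₂ Bt))

noncomputable def splitH3 : V →ₗ[k] Qt × Qt × (Fin M → K4 → k) :=
  B.constr ℕ (Sum.elim (liftA Bt) (liftB₃ Bt))

variable {B Bt}

theorem splitH1_leftInverse (hV : IsVinf k (M + 1) V B) (hQt : IsQtau k Qt Bt) :
    Function.LeftInverse (cover B Bt) (splitH1 B Bt) :=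
  B.leftInverse_constr _ _ <| by
    rintro (i | j)
    · exact cover_liftA i
    · rw [Sum.elim_inr, map_sub, cover_map_smul hV hQt, cover_liftA, hV.1, add_sub_cancel_left]

theorem splitH2_leftInverse (hV : IsVinf k (M + 1) V B) (hQt : IsQtau k Qt Bt) :
    Function.LeftInverse (cover B Bt) (splitH2 B Bt) :=
  B.leftInverse_constr _ _ <| by
    rintro (i | j)
    exacts [cover_liftA i, cover_liftB₂ hV hQt j]

theorem splitH3_leftInverse (hV : IsVinf k (M + 1) V B) (hQt : IsQtau k Qt Bt) :
    Function.LeftInverse (cover B Bt) (splitH3 B Bt) :=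
  B.leftInverse_constr _ _ <| by
    rintro (i | j)
    exacts [cover_liftA i, cover_liftB₃ hV hQt j]

theorem splitH1_map_smul (hV : IsVinf k (M + 1) V B) (v : V) :
    splitH1 B Bt (sg • v) = sg • splitH1 B Bt v := by
  refine B.map_smul_of_forall _ sg (fun idx => ?_) v
  rcases idx with i | j
  · simp only [hV.1, map_add, splitH1, Basis.constr_basis, Sum.elim_inl, Sum.elim_inr,
      add_sub_cancel]
  · simp only [hV.2.2.1, splitH1, Basis.constr_basis, Sum.elim_inr,
      CharTwo.smul_smul_sub_self k (K4.mul_self_eq_one sg)]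

theorem splitH2_map_smul (hV : IsVinf k (M + 1) V B) (hQt : IsQtau k Qt Bt) (v : V) :
    splitH2 B Bt (tg • v) = tg • splitH2 B Bt v := by
  refine B.map_smul_of_forall _ tg (fun idx => ?_) v
  rcases idx with i | j
  · cases i using Fin.lastCases with
    | last => simp [hV.tg_smul_last, splitH2, liftA, hQt.2.1]
    | cast c =>
      simp only [hV.tg_smul_castSucc, map_add, splitH2, Basis.constr_basis, Sum.elim_inl,
        Sum.elim_inr, liftB₂, Fin.cases_succ, add_sub_cancel]
  · simp only [hV.2.2.2, splitH2, Basis.constr_basis, Sum.elim_inr, tg_smul_liftB₂ hQt]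

theorem splitH3_map_smul (hV : IsVinf k (M + 1) V B) (v : V) :
    splitH3 B Bt ((sg * tg) • v) = (sg * tg) • splitH3 B Bt v := by
  refine B.map_smul_of_forall _ (sg * tg) (fun idx => ?_) v
  rcases idx with i | j
  · cases i using Fin.lastCases with
    | last =>
      rw [hV.sg_mul_tg_smul_last, map_add]
      simp only [splitH3, Basis.constr_basis, Sum.elim_inl, Sum.elim_inr, liftB₃_last,
        add_sub_cancel]
    | cast c =>
      rw [hV.sg_mul_tg_smul_castSucc, map_add, map_add]
      simp only [splitH3, Basis.constr_basis, Sum.elim_inl, Sum.elim_inr, liftB₃_castSucc]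
      abel
  · simp only [hV.smul_inr, splitH3, Basis.constr_basis, Sum.elim_inr, sg_mul_tg_smul_liftB₃]

end Splittings

section Kernel

variable {k : Type} [Field k] {V Qt : Type}
  [AddCommGroup V] [Module k V] [DistribMulAction K4 V] [AddCommGroup Qt] [Module k Qt]
  {M : ℕ} (B : Basis (Fin (M + 1) ⊕ Fin (M + 1)) k V) (Bt : Basis (Fin 2) k Qt)

noncomputable def kernelRetraction : Qt × Qt × (Fin M → K4 → k) →ₗ[k] V :=
  (0 : Qt →ₗ[k] V).coprod ((Bt.constr ℕ ![B (.inl 0), B (.inr 0)]).coprod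
    ((freeBasis k).constr ℕ fun p =>
      if p.2 = tg then B (.inl p.1.succ)
      else if p.2 = sg * tg then sg • B (.inl p.1.succ) else 0))

variable {B Bt}

theorem kernelRetraction_freeBasis (c : Fin M) (g : K4) :
    kernelRetraction B Bt (0, 0, freeBasis k ⟨c, g⟩) =
      if g = tg then B (.inl c.succ) else if g = sg * tg then sg • B (.inl c.succ) else 0 := by
  simp only [kernelRetraction, LinearMap.coprod_apply, map_zero,
    Basis.constr_basis, zero_add]

theorem kernelRetraction_liftA (i : Fin (M + 1)) : kernelRetraction B Bt (liftA Bt i) = 0 := by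
  cases i using Fin.lastCases with
  | last => simp [kernelRetraction, liftA]
  | cast c => simp +decide [liftA, kernelRetraction_freeBasis]

variable [DistribMulAction K4 Qt]

theorem kernelRetraction_sg_smul_liftA (i : Fin (M + 1)) :
    kernelRetraction B Bt (sg • liftA Bt i) = 0 := by
  cases i using Fin.lastCases with
  | last => simp [kernelRetraction, liftA]
  | cast c => simp +decide [liftA, smul_freeBasis, kernelRetraction_freeBasis]

theorem kernelRetraction_liftB₂ (j : Fin (M + 1)) :
    kernelRetraction B Bt (liftB₂ Bt j) = B (.inl j) := by
  cases j using Fin.cases with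
  | zero => simp [kernelRetraction, liftB₂]
  | succ c =>
    rw [liftB₂, Fin.cases_succ, map_sub]
    simp +decide [liftA, smul_freeBasis, kernelRetraction_freeBasis]

theorem kernelRetraction_sg_smul_liftB₂_sub (hV : IsVinf k (M + 1) V B) (hQt : IsQtau k Qt Bt)
    (j : Fin (M + 1)) : kernelRetraction B Bt (sg • liftB₂ Bt j - liftB₂ Bt j) = B (.inr j) := by
  cases j using Fin.cases with
  | zero => simp [kernelRetraction, liftB₂, hQt.1]
  | succ c =>
    rw [liftB₂, Fin.cases_succ, smul_sub, map_sub, map_sub, map_sub, smul_smul]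
    simp +decide [liftA, smul_freeBasis, kernelRetraction_freeBasis, hV.1]

variable [SMulCommClass K4 k V] [SMulCommClass K4 k Qt] [CharP k 2]

variable (B Bt) in
noncomputable def kernelEmbedding : V →ₗ[k] Qt × Qt × (Fin M → K4 → k) :=
  smulDefect sg (splitH2 B Bt)

theorem kernelRetraction_kernelEmbedding (hV : IsVinf k (M + 1) V B) (hQt : IsQtau k Qt Bt) :
    Function.LeftInverse (kernelRetraction B Bt) (kernelEmbedding B Bt) := by
  have key : kernelRetraction B Bt ∘ₗ kernelEmbedding B Bt = LinearMap.id := by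
    refine B.ext fun idx => ?_
    rcases idx with i | j
    · simp only [LinearMap.comp_apply, kernelEmbedding, smulDefect_apply, hV.1, map_add, splitH2,
        Basis.constr_basis, Sum.elim_inl, Sum.elim_inr, map_sub, kernelRetraction_sg_smul_liftA,
        kernelRetraction_liftA, kernelRetraction_liftB₂, zero_add, zero_sub, LinearMap.id_apply]
      exact CharTwo.neg_eq_of_module k _
    · simp only [LinearMap.comp_apply, kernelEmbedding, smulDefect_apply, hV.2.2.1, splitH2,
        Basis.constr_basis, Sum.elim_inr, kernelRetraction_sg_smul_liftB₂_sub hV hQt,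
        LinearMap.id_apply]
  exact LinearMap.congr_fun key

theorem kernelEmbedding_map_smul (hV : IsVinf k (M + 1) V B) (hQt : IsQtau k Qt Bt) (g : K4)
    (v : V) : kernelEmbedding B Bt (g • v) = g • kernelEmbedding B Bt v :=
  K4.map_smul_of_sg_tg _ (smulDefect_map_smul_self (K4.mul_self_eq_one sg))
    (smulDefect_map_smul_of_commute (Commute.all sg tg) (splitH2_map_smul hV hQt)) g v

theorem cover_comp_kernelEmbedding (hV : IsVinf k (M + 1) V B) (hQt : IsQtau k Qt Bt) :
    cover B Bt ∘ₗ kernelEmbedding B Bt = 0 :=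
  LinearMap.ext (map_smulDefect_eq_zero (cover_map_smul hV hQt sg) (splitH2_leftInverse hV hQt))

end Kernel

theorem finrank_domain_eq {k : Type} [Field k] {V Qt : Type} [AddCommGroup V] [Module k V]
    [AddCommGroup Qt] [Module k Qt] {M : ℕ} (B : Basis (Fin (M + 1) ⊕ Fin (M + 1)) k V)
    (Bt : Basis (Fin 2) k Qt) :
    finrank k (Qt × Qt × (Fin M → K4 → k)) = finrank k V + finrank k V := by
  have := Module.Finite.of_basis Bt
  rw [finrank_prod, finrank_prod, finrank_eq_card_basis Bt, finrank_eq_card_basis (freeBasis k),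
    finrank_eq_card_basis B]
  simp
  ring

end Vinf

/-- For every `n ≥ 2` there is a surjective `kG`-homomorphism
`π : Q_τ ⊕ Q_τ ⊕ (kG)^{n-1} → V_{2n,∞}` which splits on restriction to each of
`H₁, H₂, H₃` and whose kernel is isomorphic as a `kG`-module to `V_{2n,∞}` itself
(realized via an injective equivariant map `ι : V → domain` with range `ker π`). The
free module `(kG)^{n-1}` is realized as `Fin (n-1) → (K4 → k)` with the left regular
action `(g • F) i x = F i (g⁻¹x)`. -/
theorem stmt9 (k : Type) [Field k] [CharP k 2] (n : ℕ) (hn : 2 ≤ n)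
    (V : Type) [AddCommGroup V] [Module k V] [DistribMulAction K4 V] [SMulCommClass K4 k V]
    (B : Module.Basis (Fin n ⊕ Fin n) k V) (hV : IsVinf k n V B)
    (Qt : Type) [AddCommGroup Qt] [Module k Qt] [DistribMulAction K4 Qt]
    [SMulCommClass K4 k Qt] (Bt : Module.Basis (Fin 2) k Qt) (hQt : IsQtau k Qt Bt) :
    ∃ π : (Qt × Qt × (Fin (n - 1) → K4 → k)) →ₗ[k] V,
      Function.Surjective π ∧
      (∀ (g : K4) (q : Qt × Qt × (Fin (n - 1) → K4 → k)),
        π (g • q.1, g • q.2.1, fun i x => q.2.2 i (g⁻¹ * x)) = g • π q) ∧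
      (∀ H ∈ ({H1, H2, H3} : Set (Subgroup K4)),
        ∃ s : V →ₗ[k] (Qt × Qt × (Fin (n - 1) → K4 → k)),
          (∀ v : V, π (s v) = v) ∧
          (∀ h ∈ H, ∀ v : V,
            s (h • v) = (h • (s v).1, h • (s v).2.1, fun i x => (s v).2.2 i (h⁻¹ * x)))) ∧
      ∃ ι : V →ₗ[k] (Qt × Qt × (Fin (n - 1) → K4 → k)),
        Function.Injective ι ∧
        (∀ (g : K4) (v : V),
          ι (g • v) = (g • (ι v).1, g • (ι v).2.1, fun i x => (ι v).2.2 i (g⁻¹ * x))) ∧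
        LinearMap.range ι = LinearMap.ker π := by
  obtain ⟨M, rfl⟩ : ∃ M, n = M + 1 := ⟨n - 1, by omega⟩
  have := Module.Finite.of_basis Bt
  have hsurj := (Vinf.splitH1_leftInverse hV hQt).surjective
  have hinj := (Vinf.kernelRetraction_kernelEmbedding hV hQt).injective
  refine ⟨Vinf.cover B Bt, hsurj, Vinf.cover_map_smul hV hQt, ?_,
    Vinf.kernelEmbedding B Bt, hinj, Vinf.kernelEmbedding_map_smul hV hQt, ?_⟩
  · simp only [Set.mem_insert_iff, Set.mem_singleton_iff]
    rintro H (rfl | rfl | rfl)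
    · exact ⟨Vinf.splitH1 B Bt, Vinf.splitH1_leftInverse hV hQt,
        fun h hh => map_smul_of_mem_zpowers _ (Vinf.splitH1_map_smul hV) hh⟩
    · exact ⟨Vinf.splitH2 B Bt, Vinf.splitH2_leftInverse hV hQt,
        fun h hh => map_smul_of_mem_zpowers _ (Vinf.splitH2_map_smul hV hQt) hh⟩
    · exact ⟨Vinf.splitH3 B Bt, Vinf.splitH3_leftInverse hV hQt,
        fun h hh => map_smul_of_mem_zpowers _ (Vinf.splitH3_map_smul hV) hh⟩
  · exact LinearMap.range_eq_ker_of_finrank_eq hinj hsurj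
      (Vinf.cover_comp_kernelEmbedding hV hQt) (Vinf.finrank_domain_eq B Bt)
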